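/- Let L be a type with at least 3 elements. Then there exist consequence operators C₁ and C₂ on L such that the composition C₁ ∘ C₂ : Set L → Set L is NOT a consequence operator on L (it fails idempotence). -/
import Mathlib


def IsConsequenceOperator {L : Type*} (C : Set L → Set L) : Prop :=
  (∀ X : Set L, X ⊆ C X) ∧ (∀ X : Set L, C (C X) = C X) ∧
    ∀ X Y : Set L, X ⊆ Y → C X ⊆ C Y

def addIf {L : Type*} (u v : L) (X : Set L) : Set L :=
  {x | x ∈ X ∨ (u ∈ X ∧ x = v)}

lemma addIf_mem_left {L : Type*} (u v : L) (huv : u ≠ v) (X : Set L) :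
    u ∈ addIf u v X ↔ u ∈ X := by
  simp [addIf, huv]

lemma addIf_isCO {L : Type*} (u v : L) (huv : u ≠ v) :
    IsConsequenceOperator (addIf u v) := by
  refine ⟨fun X x hx => Or.inl hx, fun X => ?_, fun X Y hXY x hx => ?_⟩
  · ext x
    simp only [addIf, Set.mem_setOf_eq]
    constructor
    · rintro (h | ⟨hu, rfl⟩)
      · exact h
      · rcases hu with hu | ⟨hu, h⟩
        · exact Or.inr ⟨hu, rfl⟩
        · exact absurd h huv
    · intro h; exact Or.inl h
  · rcases hx with hx | ⟨hu, rfl⟩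
    · exact Or.inl (hXY hx)
    · exact Or.inr ⟨hXY hu, rfl⟩

/-- Example 3.4: for a language with at least 3 elements, the composition
of two consequence operators need not be a consequence operator. -/
theorem stmt_16 {L : Type*} (a b c : L) (hab : a ≠ b) (hac : a ≠ c) (hbc : b ≠ c) :
    ∃ C₁ C₂ : Set L → Set L,
      IsConsequenceOperator C₁ ∧ IsConsequenceOperator C₂ ∧
      ¬ IsConsequenceOperator (C₁ ∘ C₂) := by
  refine ⟨addIf a b, addIf b c, addIf_isCO a b hab, addIf_isCO b c hbc, ?_⟩
  rintro ⟨-, hidem, -⟩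
  have h := hidem {a}
  have hc : c ∈ (addIf a b ∘ addIf b c) ((addIf a b ∘ addIf b c) {a}) := by
    simp only [Function.comp, addIf, Set.mem_setOf_eq, Set.mem_singleton_iff]
    tauto
  rw [h] at hc
  simp [Function.comp, addIf, hab.symm, hac.symm, hbc.symm] at hc
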